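/- For any nonempty lists x and y of strings and any string u, the merge of the concatenated list x ++ y is no longer than the merge of the list x ++ [u] ++ y, i.e., |M(x ++ y)| ≤ |M(x ++ [u] ++ y)|. -/
import Mathlib


/-- `ov u v` is the largest `r ≤ min |u| |v|` such that the suffix of `u` of length `r`
equals the prefix of `v` of length `r`. -/
def ov {σ : Type*} [DecidableEq σ] (u v : List σ) : ℕ :=
  Nat.findGreatest (fun r => u.drop (u.length - r) = v.take r) (min u.length v.length)

/-- Auxiliary function for the merge of a sequence of strings. -/
def mergeAux {σ : Type*} [DecidableEq σ] (acc prev : List σ) : List (List σ) → List σ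
  | [] => acc
  | v :: rest => mergeAux (acc ++ v.drop (ov prev v)) v rest

/-- The merge `M(u₁, …, u_ℓ)` of a sequence of strings. -/
def mergeL {σ : Type*} [DecidableEq σ] : List (List σ) → List σ
  | [] => []
  | u :: rest => mergeAux u u rest

/-- The total overlap `∑_{j=1}^{ℓ-1} ov(u_j, u_{j+1})` of consecutive strings in a list. -/
def totalOv {σ : Type*} [DecidableEq σ] (l : List (List σ)) : ℕ :=
  (List.zipWith ov l l.tail).sum

section aux
variable {σ : Type*} [DecidableEq σ]

lemma ov_le_left (u v : List σ) : ov u v ≤ u.length :=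
  le_trans (Nat.findGreatest_le _) (min_le_left _ _)

lemma ov_le_right (u v : List σ) : ov u v ≤ v.length :=
  le_trans (Nat.findGreatest_le _) (min_le_right _ _)

lemma ov_spec (u v : List σ) : u.drop (u.length - ov u v) = v.take (ov u v) := by
  have h0 : (fun r => u.drop (u.length - r) = v.take r) 0 := by
    simp only [Nat.sub_zero, List.drop_length, List.take_zero]
  exact Nat.findGreatest_spec (P := fun r => u.drop (u.length - r) = v.take r)
    (Nat.zero_le _) h0

lemma le_ov {u v : List σ} {t : ℕ} (ht1 : t ≤ u.length) (ht2 : t ≤ v.length)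
    (h : u.drop (u.length - t) = v.take t) : t ≤ ov u v :=
  Nat.le_findGreatest (le_min ht1 ht2) h

/-- Key triangle-type inequality for overlaps. -/
lemma ov_triangle (a u b : List σ) : ov a u + ov u b ≤ u.length + ov a b := by
  set r := ov a u with hr
  set s := ov u b with hs
  by_cases hle : r + s ≤ u.length
  · omega
  · have hra : r ≤ a.length := ov_le_left a u
    have hru : r ≤ u.length := ov_le_right a u
    have hsu : s ≤ u.length := ov_le_left u b
    have hsb : s ≤ b.length := ov_le_right u b
    set t := r + s - u.length with htdef
    have h1 : a.drop (a.length - r) = u.take r := ov_spec a u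
    have h2 : u.drop (u.length - s) = b.take s := ov_spec u b
    have key : a.drop (a.length - t) = b.take t := by
      have e1 : a.drop (a.length - t) = (a.drop (a.length - r)).drop (r - t) := by
        rw [List.drop_drop]
        congr 1
        omega
      rw [e1, h1, List.drop_take]
      rw [show r - (r - t) = t by omega, show r - t = u.length - s by omega, h2,
        List.take_take]
      congr 1
      omega
    have : t ≤ ov a b := le_ov (by omega) (by omega) key
    omega

lemma totalOv_cons_cons (a b : List σ) (l : List (List σ)) :
    totalOv (a :: b :: l) = ov a b + totalOv (b :: l) := by
  simp [totalOv]

lemma totalOv_append_cons (p : List (List σ)) (a : List σ) (q : List (List σ)) :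
    totalOv (p ++ a :: q) = totalOv (p ++ [a]) + totalOv (a :: q) := by
  induction p with
  | nil => simp [totalOv]
  | cons c p' ih =>
    cases p' with
    | nil => simp [totalOv_cons_cons, totalOv]
    | cons e p'' =>
      simp only [List.cons_append, totalOv_cons_cons] at *
      omega

lemma mergeAux_length (acc prev : List σ) (l : List (List σ)) :
    (mergeAux acc prev l).length + totalOv (prev :: l) =
      acc.length + (l.map List.length).sum := by
  induction l generalizing acc prev with
  | nil => simp [mergeAux, totalOv]
  | cons v rest ih =>
    have hov : ov prev v ≤ v.length := ov_le_right prev v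
    have := ih (acc ++ v.drop (ov prev v)) v
    simp only [mergeAux, totalOv_cons_cons, List.map_cons, List.sum_cons] at *
    simp [List.length_append, List.length_drop] at this ⊢
    omega

lemma mergeL_length (u : List σ) (rest : List (List σ)) :
    (mergeL (u :: rest)).length + totalOv (u :: rest) =
      u.length + (rest.map List.length).sum := by
  simpa [mergeL] using mergeAux_length u u rest

lemma mergeL_length' (l : List (List σ)) (h : l ≠ []) :
    (mergeL l).length + totalOv l = (l.map List.length).sum := by
  cases l with
  | nil => exact absurd rfl h
  | cons u rest => exact mergeL_length u rest

end aux

theorem stmt6 {σ : Type*} [DecidableEq σ] (x y : List (List σ)) (hx : x ≠ []) (hy : y ≠ [])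
    (u : List σ) :
    (mergeL (x ++ y)).length ≤ (mergeL (x ++ [u] ++ y)).length := by
  obtain ⟨x', a, rfl⟩ : ∃ x' a, x = x' ++ [a] := by
    rcases List.eq_nil_or_concat x with h | ⟨L, c, h⟩
    · exact absurd h hx
    · exact ⟨L, c, by simpa [List.concat_eq_append] using h⟩
  obtain ⟨b, y', rfl⟩ := List.exists_cons_of_ne_nil hy
  have e1 : x' ++ [a] ++ b :: y' = x' ++ a :: (b :: y') := by simp
  have e2 : x' ++ [a] ++ [u] ++ b :: y' = x' ++ a :: (u :: b :: y') := by simp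
  rw [e1, e2]
  have L1 := mergeL_length' (x' ++ a :: (b :: y')) (by simp)
  have L2 := mergeL_length' (x' ++ a :: (u :: b :: y')) (by simp)
  have hsum : ((x' ++ a :: (u :: b :: y')).map List.length).sum =
      ((x' ++ a :: (b :: y')).map List.length).sum + u.length := by
    simp; ring
  have T1 : totalOv (x' ++ a :: (b :: y')) = totalOv (x' ++ [a]) + ov a b + totalOv (b :: y') := by
    rw [totalOv_append_cons, totalOv_cons_cons]; ring
  have T2 : totalOv (x' ++ a :: (u :: b :: y')) =
      totalOv (x' ++ [a]) + ov a u + ov u b + totalOv (b :: y') := by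
    rw [totalOv_append_cons, totalOv_cons_cons, totalOv_cons_cons]; ring
  have key := ov_triangle a u b
  omega
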